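/- arXiv:1801.10229 — 5 statements merged into one kernel-verified Lean document; each statement's English description precedes it below -/
import Mathlib

section
/- Let n > d and n > r. The similarity distance M_n is padding invariant: for every k ∈ ℕ, Y₁ ∈ ℝ^{n×p}, Y₂ ∈ ℝ^{n×(p+k)}, and c ∈ ℝ^k, one has M_n([Y₁, 1·cᵀ], Y₂) = M_n(Y₁, Y₂), where [Y₁, 1·cᵀ] ∈ ℝ^{n×(p+k)} is Y₁ augmented by k constant columns whose rows all equal cᵀ. -/
open Matrix

noncomputable section

/-- The `n×n` centering matrix `H = I − (1/n)·11ᵀ`. -/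
def centering (n : ℕ) : Matrix (Fin n) (Fin n) ℝ :=
  1 - (n : ℝ)⁻¹ • Matrix.of (fun _ _ => (1 : ℝ))

/-- Zero-padding of an `n×d` matrix to an `n×l` matrix (extra columns are zero). -/
def padMat {n d : ℕ} (l : ℕ) (A : Matrix (Fin n) (Fin d) ℝ) : Matrix (Fin n) (Fin l) ℝ :=
  Matrix.of fun i j => if hj : (j : ℕ) < d then A i ⟨j, hj⟩ else 0

/-- Frobenius norm of a real matrix. -/
def frob {m k : ℕ} (A : Matrix (Fin m) (Fin k) ℝ) : ℝ :=
  Real.sqrt (∑ i, ∑ j, (A i j) ^ 2)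

/-- The similarity distance
`M_n(A,B) = min_{R ∈ O(l)} ‖H·[A,0_{n×(l−d)}] − H·[B,0_{n×(l−r)}]·R‖_F`, `l = max d r`. -/
def Mdist {n d r : ℕ} (A : Matrix (Fin n) (Fin d) ℝ) (B : Matrix (Fin n) (Fin r) ℝ) : ℝ :=
  ⨅ Q : Matrix.orthogonalGroup (Fin (max d r)) ℝ,
    frob (centering n * padMat (max d r) A -
      centering n * padMat (max d r) B * (Q : Matrix (Fin (max d r)) (Fin (max d r)) ℝ))


/-- Auxiliary: the `Mdist` infimum with an arbitrary padding size `l`. -/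
def maux {n d r : ℕ} (l : ℕ) (A : Matrix (Fin n) (Fin d) ℝ)
    (B : Matrix (Fin n) (Fin r) ℝ) : ℝ :=
  ⨅ Q : Matrix.orthogonalGroup (Fin l) ℝ,
    frob (centering n * padMat l A -
      centering n * padMat l B * (Q : Matrix (Fin l) (Fin l) ℝ))

/-- The similarity distance is padding invariant: augmenting the first
argument by `k` constant columns does not change the distance. -/
theorem mdist_padding_invariant (n p k : ℕ) (hn : p + k < n)
    (Y₁ : Matrix (Fin n) (Fin p) ℝ) (Y₂ : Matrix (Fin n) (Fin (p + k)) ℝ)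
    (c : Fin k → ℝ)
    (aug : Matrix (Fin n) (Fin (p + k)) ℝ)
    (haug : aug = Matrix.of fun (i : Fin n) (j : Fin (p + k)) =>
      if hj : (j : ℕ) < p then Y₁ i ⟨j, hj⟩
      else c ⟨(j : ℕ) - p, by have := j.isLt; omega⟩) :
    Mdist aug Y₂ = Mdist Y₁ Y₂ := by
  have h0 : (0 : ℕ) < n := by omega
  have hsum : ∀ i : Fin n, ∑ t : Fin n, centering n i t = 0 := by
    intro i
    have hn0 : (n : ℝ) ≠ 0 := by positivity
    simp [centering, Matrix.sub_apply, Matrix.smul_apply, Matrix.one_apply,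
      Finset.sum_sub_distrib, hn0]
  have key : ∀ l : ℕ, centering n * padMat l aug = centering n * padMat l Y₁ := by
    intro l
    ext i j
    simp only [Matrix.mul_apply, padMat, haug, Matrix.of_apply]
    by_cases hj1 : (j : ℕ) < p
    · have hj2 : (j : ℕ) < p + k := by omega
      simp [hj1, hj2]
    · by_cases hj2 : (j : ℕ) < p + k
      · simp only [dif_pos hj2, dif_neg hj1, mul_zero, Finset.sum_const_zero]
        rw [← Finset.sum_mul, hsum i, zero_mul]
      · simp [hj1, hj2]
  have e1 : Mdist aug Y₂ = maux (max (p + k) (p + k)) aug Y₂ := rfl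
  have e2 : Mdist Y₁ Y₂ = maux (max p (p + k)) Y₁ Y₂ := rfl
  rw [e1, e2, Nat.max_self, Nat.max_eq_right (Nat.le_add_right p k)]
  unfold maux
  rw [key]
end
end

section
/- For every β ∈ (0,1], the discriminant of the cubic polynomial f(z) = −3·z³ + (2β+1)·z² + (β²+6β)·z + β² equals β²·(16β⁴ + 128β³ + 496β² + 2400β + 32), which is strictly positive; consequently f has three distinct real roots. -/
lemma ivt_root_pos_neg (g : ℝ → ℝ) (hg : Continuous g) (p q : ℝ) (hpq : p < q)
    (hp : 0 < g p) (hq : g q < 0) : ∃ z, p < z ∧ z < q ∧ g z = 0 := by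
  obtain ⟨z, hz, hz0⟩ := intermediate_value_Ioo' (le_of_lt hpq) hg.continuousOn
    (Set.mem_Ioo.mpr ⟨hq, hp⟩)
  exact ⟨z, hz.1, hz.2, hz0⟩

lemma ivt_root_neg_pos (g : ℝ → ℝ) (hg : Continuous g) (p q : ℝ) (hpq : p < q)
    (hp : g p < 0) (hq : 0 < g q) : ∃ z, p < z ∧ z < q ∧ g z = 0 := by
  obtain ⟨z, hz, hz0⟩ := intermediate_value_Ioo (le_of_lt hpq) hg.continuousOn
    (Set.mem_Ioo.mpr ⟨hp, hq⟩)
  exact ⟨z, hz.1, hz.2, hz0⟩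

/-- For `β ∈ (0,1]`, the discriminant of the cubic
`f(z) = −3z³ + (2β+1)z² + (β²+6β)z + β²` (with `a = −3`, `b = 2β+1`, `c = β²+6β`, `d = β²`,
discriminant `b²c² − 4ac³ − 4b³d − 27a²d² + 18abcd`) equals
`β²·(16β⁴ + 128β³ + 496β² + 2400β + 32)`, is strictly positive, and consequently `f` has
three distinct real roots. -/
theorem cubic_discriminant_positive (β : ℝ) (hβ0 : 0 < β) (hβ1 : β ≤ 1)
    (a b c d : ℝ) (ha : a = -3) (hb : b = 2 * β + 1) (hc : c = β ^ 2 + 6 * β)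
    (hd : d = β ^ 2)
    (disc : ℝ)
    (hdisc : disc = b ^ 2 * c ^ 2 - 4 * a * c ^ 3 - 4 * b ^ 3 * d - 27 * a ^ 2 * d ^ 2
      + 18 * a * b * c * d) :
    disc = β ^ 2 * (16 * β ^ 4 + 128 * β ^ 3 + 496 * β ^ 2 + 2400 * β + 32) ∧
    0 < disc ∧
    ∃ z₁ z₂ z₃ : ℝ, z₁ ≠ z₂ ∧ z₁ ≠ z₃ ∧ z₂ ≠ z₃ ∧
      (∀ z ∈ ({z₁, z₂, z₃} : Set ℝ),
        a * z ^ 3 + b * z ^ 2 + c * z + d = 0) := by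
  subst ha hb hc hd hdisc
  set g : ℝ → ℝ := fun z => (-3 : ℝ) * z ^ 3 + (2 * β + 1) * z ^ 2
      + (β ^ 2 + 6 * β) * z + β ^ 2 with hg
  have hgc : Continuous g := by fun_prop
  refine ⟨by ring, by nlinarith [sq_nonneg β, mul_pos hβ0 hβ0], ?_⟩
  -- choose a point x₁ ∈ (-10, 0) where g is negative
  obtain ⟨x₁, hx₁l, hx₁r, hx₁neg⟩ : ∃ x₁, (-10 : ℝ) < x₁ ∧ x₁ < 0 ∧ g x₁ < 0 := by
    by_cases hcase : β ≤ 2/5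
    · refine ⟨-(3 * β / 2), by nlinarith, by nlinarith, ?_⟩
      have : g (-(3 * β / 2)) = β ^ 2 * (105 * β - 46) / 8 := by simp only [hg]; ring
      rw [this]; nlinarith [mul_pos hβ0 hβ0]
    · push_neg at hcase
      refine ⟨-(1/2), by norm_num, by norm_num, ?_⟩
      have : g (-(1/2)) = 5/8 - 5 * β / 2 + β ^ 2 / 2 := by simp only [hg]; ring
      rw [this]; nlinarith
  have hgm10 : 0 < g (-10) := by
    have : g (-10) = -9 * β ^ 2 + 140 * β + 3100 := by simp only [hg]; ring
    rw [this]; nlinarith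
  have hg0 : 0 < g 0 := by
    have : g 0 = β ^ 2 := by simp only [hg]; ring
    rw [this]; positivity
  have hg10 : g 10 < 0 := by
    have : g 10 = 11 * β ^ 2 + 260 * β - 2900 := by simp only [hg]; ring
    rw [this]; nlinarith
  obtain ⟨z₁, hz₁l, hz₁r, hz₁⟩ := ivt_root_pos_neg g hgc (-10) x₁ hx₁l hgm10 hx₁neg
  obtain ⟨z₂, hz₂l, hz₂r, hz₂⟩ := ivt_root_neg_pos g hgc x₁ 0 hx₁r hx₁neg hg0
  obtain ⟨z₃, hz₃l, hz₃r, hz₃⟩ := ivt_root_pos_neg g hgc 0 10 (by norm_num) hg0 hg10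
  refine ⟨z₁, z₂, z₃, by linarith, by linarith, by linarith, ?_⟩
  intro z hz
  rcases hz with h | h | h <;> subst h <;> assumption
end

section
/- Let σ > 0, β ∈ (0,1], and x ≥ σ·β^{1/4}. Then y(x) − 2·x·c(x) ≤ 0 if and only if −3·(x/σ)⁶ + (1+2β)·(x/σ)⁴ + (β²+6β)·(x/σ)² + β² ≤ 0, i.e., if and only if f((x/σ)²) ≤ 0 where f(z) = −3·z³ + (2β+1)·z² + (β²+6β)·z + β². Equivalently, the condition y(x)² + x² − 2·x·y(x)·c(x) ≤ x² for the hard-threshold comparison holds exactly when f((x/σ)²) ≤ 0. -/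
/-!
Put `t = x / σ`. Both `y` and `2xc` are nonnegative, so `y ≤ 2xc` is equivalent to
`y² ≤ (2xc)²`, and after cancelling `σ²` this reads
`(t² + 1)(t² + β) / t² ≤ 4(t⁴ − β) / (t² + β)`; the lower bound on `x` is exactly what makes the
radicand of `c` nonnegative. Clearing the denominators leaves
`(t² + 1)(t² + β)² − 4t²(t⁴ − β) ≤ 0`, and this polynomial is `f(t²)`.
The last form follows because `y² + x² − 2xyc − x² = y (y − 2xc)` with `y > 0`.
-/

open Real

def svhtCubic (β z : ℝ) : ℝ :=
  -3 * z ^ 3 + (2 * β + 1) * z ^ 2 + (β ^ 2 + 6 * β) * z + β ^ 2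

lemma svhtCubic_sq (β t : ℝ) :
    svhtCubic β (t ^ 2) =
      -3 * t ^ 6 + (1 + 2 * β) * t ^ 4 + (β ^ 2 + 6 * β) * t ^ 2 + β ^ 2 := by
  unfold svhtCubic
  ring

lemma le_four_mul_iff_svhtCubic_nonpos {β t : ℝ} (hβ : 0 ≤ β) (ht : 0 < t) :
    (t + 1 / t) * (t + β / t) ≤ 4 * t ^ 2 * ((t ^ 4 - β) / (t ^ 4 + β * t ^ 2)) ↔
      svhtCubic β (t ^ 2) ≤ 0 := by
  have hlhs : (t + 1 / t) * (t + β / t) = (t ^ 2 + 1) * (t ^ 2 + β) / t ^ 2 := by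
    field_simp
  have hrhs : 4 * t ^ 2 * ((t ^ 4 - β) / (t ^ 4 + β * t ^ 2)) = 4 * (t ^ 4 - β) / (t ^ 2 + β) := by
    field_simp
  have hcubic : (t ^ 2 + 1) * (t ^ 2 + β) * (t ^ 2 + β) - 4 * (t ^ 4 - β) * t ^ 2 =
      svhtCubic β (t ^ 2) := by
    unfold svhtCubic
    ring
  rw [hlhs, hrhs, div_le_div_iff₀ (by positivity) (by positivity), ← sub_nonpos, hcubic]

lemma sub_two_mul_sqrt_nonpos_iff_svhtCubic_nonpos {σ β x : ℝ} (hσ : 0 < σ) (hβ : 0 ≤ β)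
    (hx : 0 < x) (hβx : β ≤ (x / σ) ^ 4) :
    σ * √((x / σ + σ / x) * (x / σ + β * σ / x)) -
        2 * x * √(((x / σ) ^ 4 - β) / ((x / σ) ^ 4 + β * (x / σ) ^ 2)) ≤ 0 ↔
      svhtCubic β ((x / σ) ^ 2) ≤ 0 := by
  set t := x / σ with ht_def
  have ht : 0 < t := div_pos hx hσ
  have hy : (σ * √((t + σ / x) * (t + β * σ / x))) ^ 2 = σ ^ 2 * ((t + 1 / t) * (t + β / t)) := by
    rw [ht_def, one_div_div, div_div_eq_mul_div, mul_pow, sq_sqrt (by positivity)]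
  have hc : (2 * x * √((t ^ 4 - β) / (t ^ 4 + β * t ^ 2))) ^ 2 =
      σ ^ 2 * (4 * t ^ 2 * ((t ^ 4 - β) / (t ^ 4 + β * t ^ 2))) := by
    rw [mul_pow, sq_sqrt (div_nonneg (sub_nonneg.2 hβx) (by positivity)), ht_def]
    field_simp
    ring
  rw [sub_nonpos, ← sq_le_sq₀ (by positivity) (by positivity), hy, hc,
    mul_le_mul_iff_right₀ (by positivity), le_four_mul_iff_svhtCubic_nonpos hβ ht]

lemma sq_add_sq_sub_le_sq_iff {x y c : ℝ} (hy : 0 < y) :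
    y ^ 2 + x ^ 2 - 2 * x * y * c ≤ x ^ 2 ↔ y - 2 * x * c ≤ 0 := by
  rw [← sub_nonpos, show y ^ 2 + x ^ 2 - 2 * x * y * c - x ^ 2 = y * (y - 2 * x * c) by ring,
    ← smul_eq_mul, smul_nonpos_iff_nonpos_of_pos_left hy]

theorem svht_comparison_iff_cubic_general (σ β x : ℝ) (hσ : 0 < σ) (hβ0 : 0 < β)
    (hx : σ * β ^ ((1 : ℝ) / 4) ≤ x)
    (yx cx : ℝ)
    (hyx : yx = σ * Real.sqrt ((x / σ + σ / x) * (x / σ + β * σ / x)))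
    (hcx : cx = Real.sqrt (((x / σ) ^ 4 - β) / ((x / σ) ^ 4 + β * (x / σ) ^ 2))) :
    (yx - 2 * x * cx ≤ 0 ↔
      -3 * (x / σ) ^ 6 + (1 + 2 * β) * (x / σ) ^ 4 + (β ^ 2 + 6 * β) * (x / σ) ^ 2 + β ^ 2
        ≤ 0) ∧
    (yx - 2 * x * cx ≤ 0 ↔
      -3 * ((x / σ) ^ 2) ^ 3 + (2 * β + 1) * ((x / σ) ^ 2) ^ 2
        + (β ^ 2 + 6 * β) * ((x / σ) ^ 2) + β ^ 2 ≤ 0) ∧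
    (yx ^ 2 + x ^ 2 - 2 * x * yx * cx ≤ x ^ 2 ↔
      -3 * ((x / σ) ^ 2) ^ 3 + (2 * β + 1) * ((x / σ) ^ 2) ^ 2
        + (β ^ 2 + 6 * β) * ((x / σ) ^ 2) + β ^ 2 ≤ 0) := by
  have hx0 : 0 < x := (mul_pos hσ (rpow_pos_of_pos hβ0 _)).trans_le hx
  have hβx : β ≤ (x / σ) ^ 4 := by
    have hroot : β ^ (4 : ℝ)⁻¹ ≤ x / σ := by
      rw [le_div_iff₀ hσ, mul_comm, ← one_div]
      exact hx
    exact_mod_cast (rpow_inv_le_iff_of_pos hβ0.le (div_pos hx0 hσ).le four_pos).1 hroot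
  have hyx_pos : 0 < yx := by
    rw [hyx]
    positivity
  have hmain : yx - 2 * x * cx ≤ 0 ↔ svhtCubic β ((x / σ) ^ 2) ≤ 0 := by
    rw [hyx, hcx]
    exact sub_two_mul_sqrt_nonpos_iff_svhtCubic_nonpos hσ hβ0.le hx0 hβx
  exact ⟨svhtCubic_sq β (x / σ) ▸ hmain, hmain, (sq_add_sq_sub_le_sq_iff hyx_pos).trans hmain⟩

/-- For `σ > 0`, `β ∈ (0,1]`, `x ≥ σ·β^{1/4}`, with
`y(x) = σ·√((x/σ + σ/x)(x/σ + βσ/x))` and `c(x) = √(((x/σ)⁴ − β)/((x/σ)⁴ + β(x/σ)²))`: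
`y(x) − 2xc(x) ≤ 0` iff `−3(x/σ)⁶ + (1+2β)(x/σ)⁴ + (β²+6β)(x/σ)² + β² ≤ 0`, i.e. iff
`f((x/σ)²) ≤ 0` where `f(z) = −3z³ + (2β+1)z² + (β²+6β)z + β²`; equivalently, the
hard-threshold comparison `y(x)² + x² − 2x·y(x)·c(x) ≤ x²` holds exactly when
`f((x/σ)²) ≤ 0`. -/
theorem svht_comparison_iff_cubic (σ β x : ℝ) (hσ : 0 < σ) (hβ0 : 0 < β) (hβ1 : β ≤ 1)
    (hx : σ * β ^ ((1 : ℝ) / 4) ≤ x)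
    (yx cx : ℝ)
    (hyx : yx = σ * Real.sqrt ((x / σ + σ / x) * (x / σ + β * σ / x)))
    (hcx : cx = Real.sqrt (((x / σ) ^ 4 - β) / ((x / σ) ^ 4 + β * (x / σ) ^ 2))) :
    (yx - 2 * x * cx ≤ 0 ↔
      -3 * (x / σ) ^ 6 + (1 + 2 * β) * (x / σ) ^ 4 + (β ^ 2 + 6 * β) * (x / σ) ^ 2 + β ^ 2
        ≤ 0) ∧
    (yx - 2 * x * cx ≤ 0 ↔
      -3 * ((x / σ) ^ 2) ^ 3 + (2 * β + 1) * ((x / σ) ^ 2) ^ 2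
        + (β ^ 2 + 6 * β) * ((x / σ) ^ 2) + β ^ 2 ≤ 0) ∧
    (yx ^ 2 + x ^ 2 - 2 * x * yx * cx ≤ x ^ 2 ↔
      -3 * ((x / σ) ^ 2) ^ 3 + (2 * β + 1) * ((x / σ) ^ 2) ^ 2
        + (β ^ 2 + 6 * β) * ((x / σ) ^ 2) + β ^ 2 ≤ 0) :=
  svht_comparison_iff_cubic_general σ β x hσ hβ0 hx yx cx hyx hcx
end

section
/- Let σ > 0 and β ∈ (0,1]. Define x̄(y) = (σ/√2)·√((y/σ)² − 1 − β + √(((y/σ)² − 1 − β)² − 4β)) for y ≥ σ·(1+√β). Then for every x ≥ σ·β^{1/4}, one has y(x) ≥ σ·(1+√β) and x̄(y(x)) = x; i.e., x̄ inverts the map x ↦ y(x) on [σ·β^{1/4}, ∞). -/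
/-! With `u = (x/σ)²` one has `(y/σ)² = u + β/u + 1 + β`, so the radicand of `x̄` is
`A + √(A² - 4β)` with `A = u + β/u`. Since `A² - 4β = (u - β/u)²` and `β ≤ u²` exactly when
`x ≥ σ β^{1/4}`, this is `2u`, whence `x̄(y(x)) = σ √u = x`. The bound on `y` is AM-GM:
`u + β/u ≥ 2√β`. -/

namespace Real

lemma two_mul_sqrt_le_add_div {u β : ℝ} (hu : 0 < u) (hβ : 0 ≤ β) :
    2 * √β ≤ u + β / u := by
  have hsq : (u - √β) ^ 2 / u = u + β / u - 2 * √β := by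
    rw [sub_sq, sq_sqrt hβ]
    field_simp
    ring
  linarith [div_nonneg (sq_nonneg (u - √β)) hu.le]

/-- `u` is the larger root of `z² - (u + β/u) z + β`. -/
lemma add_div_add_sqrt_sq_sub_four_mul {u β : ℝ} (hu : 0 < u) (hβ : β ≤ u ^ 2) :
    u + β / u + √((u + β / u) ^ 2 - 4 * β) = 2 * u := by
  have hdiscr : (u + β / u) ^ 2 - 4 * β = (u - β / u) ^ 2 := by
    field_simp
    ring
  have hβu : β / u ≤ u := by
    rw [div_le_iff₀ hu]
    nlinarith
  rw [hdiscr, sqrt_sq (sub_nonneg.mpr hβu)]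
  ring

lemma le_div_pow_four_of_mul_rpow_le {σ β x : ℝ} (hσ : 0 < σ) (hβ : 0 ≤ β)
    (hx : σ * β ^ ((1 : ℝ) / 4) ≤ x) : β ≤ (x / σ) ^ 4 :=
  calc β = (β ^ ((1 : ℝ) / 4)) ^ 4 := by
        rw [← rpow_natCast, ← rpow_mul hβ]
        norm_num
    _ ≤ (x / σ) ^ 4 := by
        gcongr
        rwa [le_div_iff₀' hσ]

end Real

open Real in
theorem xbar_inverts_y_general (σ β : ℝ) (hσ : 0 < σ) (hβ0 : 0 < β)
    (xbar : ℝ → ℝ)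
    (hxbar : ∀ y : ℝ, σ * (1 + Real.sqrt β) ≤ y →
      xbar y = σ / Real.sqrt 2 * Real.sqrt ((y / σ) ^ 2 - 1 - β +
        Real.sqrt (((y / σ) ^ 2 - 1 - β) ^ 2 - 4 * β)))
    (yfun : ℝ → ℝ)
    (hyfun : ∀ x : ℝ, yfun x = σ * Real.sqrt ((x / σ + σ / x) * (x / σ + β * σ / x))) :
    ∀ x : ℝ, σ * β ^ ((1 : ℝ) / 4) ≤ x →
      σ * (1 + Real.sqrt β) ≤ yfun x ∧ xbar (yfun x) = x := by
  intro x hx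
  have hx0 : 0 < x := lt_of_lt_of_le (by positivity) hx
  set u := (x / σ) ^ 2 with hu_def
  have hu : 0 < u := by positivity
  have hβu : β ≤ u ^ 2 := by
    rw [hu_def, ← pow_mul]
    exact le_div_pow_four_of_mul_rpow_le hσ hβ0.le hx
  have hprod : (x / σ + σ / x) * (x / σ + β * σ / x) = u + β / u + 1 + β := by
    rw [hu_def]
    field_simp
    ring
  have hy : yfun x = σ * √(u + β / u + 1 + β) := by rw [hyfun, hprod]
  have hy_sq : (yfun x / σ) ^ 2 = u + β / u + 1 + β := by
    rw [hy, mul_div_cancel_left₀ _ hσ.ne', sq_sqrt (by positivity)]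
  have hy_ge : σ * (1 + √β) ≤ yfun x := by
    rw [hy]
    gcongr
    apply le_sqrt_of_sq_le
    nlinarith [two_mul_sqrt_le_add_div hu hβ0.le, sq_sqrt hβ0.le]
  refine ⟨hy_ge, ?_⟩
  rw [hxbar _ hy_ge, hy_sq, show u + β / u + 1 + β - 1 - β = u + β / u by ring,
    add_div_add_sqrt_sq_sub_four_mul hu hβu, sqrt_mul zero_le_two, hu_def,
    sqrt_sq (by positivity)]
  field_simp

/-- For `σ > 0` and `β ∈ (0,1]`, define
`x̄(y) = (σ/√2)·√((y/σ)² − 1 − β + √(((y/σ)² − 1 − β)² − 4β))`. Then for every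
`x ≥ σ·β^{1/4}` one has `y(x) ≥ σ·(1+√β)` and `x̄(y(x)) = x`, where
`y(x) = σ·√((x/σ + σ/x)(x/σ + βσ/x))`. -/
theorem xbar_inverts_y (σ β : ℝ) (hσ : 0 < σ) (hβ0 : 0 < β) (hβ1 : β ≤ 1)
    (xbar : ℝ → ℝ)
    (hxbar : ∀ y : ℝ, σ * (1 + Real.sqrt β) ≤ y →
      xbar y = σ / Real.sqrt 2 * Real.sqrt ((y / σ) ^ 2 - 1 - β +
        Real.sqrt (((y / σ) ^ 2 - 1 - β) ^ 2 - 4 * β)))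
    (yfun : ℝ → ℝ)
    (hyfun : ∀ x : ℝ, yfun x = σ * Real.sqrt ((x / σ + σ / x) * (x / σ + β * σ / x))) :
    ∀ x : ℝ, σ * β ^ ((1 : ℝ) / 4) ≤ x →
      σ * (1 + Real.sqrt β) ≤ yfun x ∧ xbar (yfun x) = x :=
  xbar_inverts_y_general σ β hσ hβ0 xbar hxbar yfun hyfun
end

section
/- Let σ > 0, β ∈ (0,1], and x > σ·β^{1/4}. Then the per-component regret of classical MDS relative to the optimal shrinker satisfies (x² + y(x)² − 2·x·y(x)·c(x)) − x²·(1 − c(x)²) = (√(x² + σ²) − √((x⁴ − β·σ⁴)/x²))² + β·σ²·((x/σ)²·(1+β) + 2β)/((x/σ)⁴ + β·(x/σ)²), and this quantity is nonnegative. Moreover, for a discarded component (the case i > r), the regret equals x²·c(x)² = σ²·((x/σ)⁴ − β)/((x/σ)² + β) ≥ 0. -/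
set_option maxHeartbeats 800000


/-- For `σ > 0`, `β ∈ (0,1]`, and `x > σ·β^{1/4}`, the per-component regret
of classical MDS relative to the optimal shrinker on a retained component is
`(x² + y(x)² − 2x·y(x)·c(x)) − x²(1 − c(x)²)
  = (√(x² + σ²) − √((x⁴ − βσ⁴)/x²))² + βσ²((x/σ)²(1+β) + 2β)/((x/σ)⁴ + β(x/σ)²) ≥ 0`,
and for a discarded component the regret is
`x²·c(x)² = σ²((x/σ)⁴ − β)/((x/σ)² + β) ≥ 0`. -/
theorem mds_regret_formula (σ β x : ℝ) (hσ : 0 < σ) (hβ0 : 0 < β) (hβ1 : β ≤ 1)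
    (hx : σ * β ^ ((1 : ℝ) / 4) < x)
    (yx cx : ℝ)
    (hyx : yx = σ * Real.sqrt ((x / σ + σ / x) * (x / σ + β * σ / x)))
    (hcx : cx = Real.sqrt (((x / σ) ^ 4 - β) / ((x / σ) ^ 4 + β * (x / σ) ^ 2))) :
    ((x ^ 2 + yx ^ 2 - 2 * x * yx * cx) - x ^ 2 * (1 - cx ^ 2) =
      (Real.sqrt (x ^ 2 + σ ^ 2) - Real.sqrt ((x ^ 4 - β * σ ^ 4) / x ^ 2)) ^ 2
        + β * σ ^ 2 * ((x / σ) ^ 2 * (1 + β) + 2 * β)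
          / ((x / σ) ^ 4 + β * (x / σ) ^ 2)) ∧
    0 ≤ (x ^ 2 + yx ^ 2 - 2 * x * yx * cx) - x ^ 2 * (1 - cx ^ 2) ∧
    x ^ 2 * cx ^ 2 = σ ^ 2 * ((x / σ) ^ 4 - β) / ((x / σ) ^ 2 + β) ∧
    0 ≤ x ^ 2 * cx ^ 2 := by
  have hσ' : σ ≠ 0 := ne_of_gt hσ
  have hb14 : 0 < β ^ ((1 : ℝ) / 4) := Real.rpow_pos_of_pos hβ0 _
  have hx0 : 0 < x := lt_trans (by positivity) hx
  have hx' : x ≠ 0 := ne_of_gt hx0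
  have hβ4 : (β ^ ((1 : ℝ) / 4)) ^ (4 : ℕ) = β := by
    rw [← Real.rpow_natCast (β ^ ((1 : ℝ) / 4)) 4, ← Real.rpow_mul hβ0.le]
    norm_num
  have htlt : β ^ ((1 : ℝ) / 4) < x / σ := by
    rw [lt_div_iff₀ hσ]
    linarith [hx]
  have ht : β < (x / σ) ^ 4 := by
    calc β = (β ^ ((1 : ℝ) / 4)) ^ (4 : ℕ) := hβ4.symm
    _ < (x / σ) ^ 4 := by
        apply pow_lt_pow_left₀ htlt hb14.le
        norm_num
  have hden1 : 0 < (x / σ) ^ 4 + β * (x / σ) ^ 2 := by positivity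
  have hden1' : (x / σ) ^ 4 + β * (x / σ) ^ 2 ≠ 0 := ne_of_gt hden1
  have hden2 : 0 < (x / σ) ^ 2 + β := by positivity
  have hden2' : (x / σ) ^ 2 + β ≠ 0 := ne_of_gt hden2
  have hc2 : cx ^ 2 = ((x / σ) ^ 4 - β) / ((x / σ) ^ 4 + β * (x / σ) ^ 2) := by
    rw [hcx, Real.sq_sqrt]
    exact div_nonneg (by linarith) hden1.le
  have hy2 : yx ^ 2 = σ ^ 2 * ((x / σ + σ / x) * (x / σ + β * σ / x)) := by
    rw [hyx, mul_pow, Real.sq_sqrt]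
    have h1 : 0 < x / σ + σ / x := by positivity
    have h2 : 0 < x / σ + β * σ / x := by positivity
    positivity
  have hbx4 : β * σ ^ 4 < x ^ 4 := by
    have h4 : (x / σ) ^ 4 = x ^ 4 / σ ^ 4 := by field_simp
    rw [h4, lt_div_iff₀ (by positivity)] at ht
    linarith
  set A := Real.sqrt (x ^ 2 + σ ^ 2) with hA
  set B := Real.sqrt ((x ^ 4 - β * σ ^ 4) / x ^ 2) with hB
  have hA0 : 0 ≤ A := Real.sqrt_nonneg _
  have hB0 : 0 ≤ B := Real.sqrt_nonneg _
  have hA2 : A ^ 2 = x ^ 2 + σ ^ 2 := Real.sq_sqrt (by positivity)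
  have hB2 : B ^ 2 = (x ^ 4 - β * σ ^ 4) / x ^ 2 :=
    Real.sq_sqrt (div_nonneg (by linarith) (by positivity))
  have hyx0 : 0 ≤ yx := by rw [hyx]; positivity
  have hcx0 : 0 ≤ cx := by rw [hcx]; exact Real.sqrt_nonneg _
  have hsq : (x * yx * cx) ^ 2 = (A * B) ^ 2 := by
    have h1 : (x * yx * cx) ^ 2 = x ^ 2 * yx ^ 2 * cx ^ 2 := by ring
    have h2 : (A * B) ^ 2 = A ^ 2 * B ^ 2 := by ring
    rw [h1, h2, hy2, hc2, hA2, hB2]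
    field_simp
  have hprod : x * yx * cx = A * B := by
    have h1 : 0 ≤ x * yx * cx := by positivity
    have h2 : 0 ≤ A * B := by positivity
    calc x * yx * cx = Real.sqrt ((x * yx * cx) ^ 2) := (Real.sqrt_sq h1).symm
    _ = Real.sqrt ((A * B) ^ 2) := by rw [hsq]
    _ = A * B := Real.sqrt_sq h2
  have key : yx ^ 2 + x ^ 2 * cx ^ 2 = A ^ 2 + B ^ 2
      + β * σ ^ 2 * ((x / σ) ^ 2 * (1 + β) + 2 * β)
        / ((x / σ) ^ 4 + β * (x / σ) ^ 2) := by
    rw [hy2, hc2, hA2, hB2]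
    field_simp
    ring
  have goal1 : (x ^ 2 + yx ^ 2 - 2 * x * yx * cx) - x ^ 2 * (1 - cx ^ 2) =
      (A - B) ^ 2 + β * σ ^ 2 * ((x / σ) ^ 2 * (1 + β) + 2 * β)
        / ((x / σ) ^ 4 + β * (x / σ) ^ 2) := by
    calc (x ^ 2 + yx ^ 2 - 2 * x * yx * cx) - x ^ 2 * (1 - cx ^ 2)
        = yx ^ 2 + x ^ 2 * cx ^ 2 - 2 * (x * yx * cx) := by ring
      _ = (A ^ 2 + B ^ 2 + β * σ ^ 2 * ((x / σ) ^ 2 * (1 + β) + 2 * β)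
            / ((x / σ) ^ 4 + β * (x / σ) ^ 2)) - 2 * (A * B) := by rw [key, hprod]
      _ = (A - B) ^ 2 + β * σ ^ 2 * ((x / σ) ^ 2 * (1 + β) + 2 * β)
            / ((x / σ) ^ 4 + β * (x / σ) ^ 2) := by ring
  have hE : 0 ≤ β * σ ^ 2 * ((x / σ) ^ 2 * (1 + β) + 2 * β)
      / ((x / σ) ^ 4 + β * (x / σ) ^ 2) := by positivity
  refine ⟨goal1, ?_, ?_, by positivity⟩
  · rw [goal1]
    exact add_nonneg (sq_nonneg _) hE
  · rw [hc2]
    field_simp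
end
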